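/- arXiv:1102.2551 — 2 statements merged into one kernel-verified Lean document; each statement's English description precedes it below -/
import Mathlib

section
/- Let r : [0,1] → ℝ be a regular revenue function such that for every c ∈ ℝ the maximizer s*(c) of s ↦ r(s)+(1−s)c over [0,1] is unique, and let R(c) = max_{s∈[0,1]}(r(s)+(1−s)c). Let Q : Ω → ℝ^A be an integrable random vector extended by Q_0 ≡ 0, let ρ_a ∈ (0,1) for a in the finite set A, and suppose v ∈ ℝ^A (extended by v_0 = 0) minimizes ψ(v) = E[R(max_{a∈A₀}(Q_a − v_a))] + Σ_{a∈A} v_a ρ_a over ℝ^A, where A₀ = {0} ∪ A. If ties occur with probability zero, i.e. P{Q_a − v_a = Q_{a′} − v_{a′}} = 0 for all distinct a, a′ ∈ A₀, then for every a ∈ A: E[ (1 − s*(Q_a − v_a)) · 1{ Q_a − v_a > Q_{a′} − v_{a′} for all a′ ∈ A₀, a′ ≠ a } ] = ρ_a. -/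
/-! Fix an advertiser `a`, let `c = Q_a - v_a` and let `M` be the largest contract-adjusted
quality among the other options `A₀ \ {a}`. Shifting `v_a` by `t` turns the dual objective into
`ψ_a(t) = E[R(max(M, c - t))] + Σ_b v_b ρ_b + t ρ_a`, which is minimal at `t = 0`.

By the envelope theorem `R' = 1 - s*`: the affine minorants `s ↦ r s + (1 - s) c` give
`R(c) + (1 - s*(c)) h ≤ R(c + h) ≤ R(c) + (1 - s*(c + h)) h`, and uniqueness of the maximizer
makes `s*` continuous. Since `R` is 1-Lipschitz we may differentiate under the expectation;
because ties are null, almost surely either `c > M`, where `t ↦ R(max(M, c - t))` has derivative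
`-(1 - s*(c))` at 0, or `c < M`, where it is locally constant. So
`0 = ψ_a'(0) = -E[(1 - s*(c)) 1{c > M}] + ρ_a`. -/

open Set MeasureTheory Filter Topology

section Maximizer

variable {r sstar R : ℝ → ℝ}

theorem isMaxOn_of_tendsto_maximizer (hr : ContinuousOn r (Icc 0 1))
    (hmem : ∀ c, sstar c ∈ Icc (0 : ℝ) 1)
    (hmax : ∀ c, IsMaxOn (fun s => r s + (1 - s) * c) (Icc 0 1) (sstar c))
    {l : Filter ℝ} [l.NeBot] {c L : ℝ} (hl : l ≤ 𝓝 c) (hL : Tendsto sstar l (𝓝 L)) :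
    IsMaxOn (fun s => r s + (1 - s) * c) (Icc 0 1) L := by
  have hLmem : L ∈ Icc (0 : ℝ) 1 := isClosed_Icc.mem_of_tendsto hL (Eventually.of_forall hmem)
  have hrL : Tendsto (fun c' => r (sstar c')) l (𝓝 (r L)) :=
    (hr L hLmem).tendsto.comp (tendsto_nhdsWithin_iff.2 ⟨hL, Eventually.of_forall hmem⟩)
  have hc : Tendsto id l (𝓝 c) := hl
  refine isMaxOn_iff.2 fun t ht => le_of_tendsto_of_tendsto
    (tendsto_const_nhds.add (tendsto_const_nhds.mul hc))
    (hrL.add ((tendsto_const_nhds.sub hL).mul hc))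
    (Eventually.of_forall fun c' => isMaxOn_iff.1 (hmax c') t ht)

theorem continuous_of_unique_isMaxOn (hr : ContinuousOn r (Icc 0 1))
    (hmem : ∀ c, sstar c ∈ Icc (0 : ℝ) 1)
    (hmax : ∀ c, IsMaxOn (fun s => r s + (1 - s) * c) (Icc 0 1) (sstar c))
    (huniq : ∀ c, ∀ t ∈ Icc (0 : ℝ) 1,
      IsMaxOn (fun s => r s + (1 - s) * c) (Icc 0 1) t → t = sstar c) :
    Continuous sstar := by
  refine continuous_iff_continuousAt.2 fun c =>
    isCompact_Icc.tendsto_nhds_of_unique_mapClusterPt (Eventually.of_forall hmem) fun y hy hcl => ?_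
  obtain ⟨U, hUc, hUy⟩ := mapClusterPt_iff_ultrafilter.1 hcl
  exact huniq c y hy (isMaxOn_of_tendsto_maximizer hr hmem hmax hUc hUy)

theorem add_mul_sub_le_revenue (hmem : ∀ c, sstar c ∈ Icc (0 : ℝ) 1)
    (hmax : ∀ c, IsMaxOn (fun s => r s + (1 - s) * c) (Icc 0 1) (sstar c))
    (hR : ∀ c, R c = r (sstar c) + (1 - sstar c) * c) (c d : ℝ) :
    R c + (1 - sstar c) * (d - c) ≤ R d := by
  have := isMaxOn_iff.1 (hmax d) (sstar c) (hmem c)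
  rw [hR, hR]
  linarith

theorem lipschitzWith_one_revenue (hmem : ∀ c, sstar c ∈ Icc (0 : ℝ) 1)
    (hmax : ∀ c, IsMaxOn (fun s => r s + (1 - s) * c) (Icc 0 1) (sstar c))
    (hR : ∀ c, R c = r (sstar c) + (1 - sstar c) * c) :
    LipschitzWith 1 R := by
  refine LipschitzWith.of_le_add_mul 1 fun c d => ?_
  have hsub := add_mul_sub_le_revenue hmem hmax hR c d
  have hslope : (1 - sstar c) * (c - d) ≤ dist c d := by
    rw [Real.dist_eq]
    obtain ⟨h0, h1⟩ := hmem c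
    calc (1 - sstar c) * (c - d) ≤ (1 - sstar c) * |c - d| :=
          mul_le_mul_of_nonneg_left (le_abs_self _) (by linarith)
      _ ≤ |c - d| := mul_le_of_le_one_left (abs_nonneg _) (by linarith)
  push_cast
  linarith

theorem hasDerivAt_revenue (hr : ContinuousOn r (Icc 0 1))
    (hmem : ∀ c, sstar c ∈ Icc (0 : ℝ) 1)
    (hmax : ∀ c, IsMaxOn (fun s => r s + (1 - s) * c) (Icc 0 1) (sstar c))
    (huniq : ∀ c, ∀ t ∈ Icc (0 : ℝ) 1,
      IsMaxOn (fun s => r s + (1 - s) * c) (Icc 0 1) t → t = sstar c)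
    (hR : ∀ c, R c = r (sstar c) + (1 - sstar c) * c) (c : ℝ) :
    HasDerivAt R (1 - sstar c) c := by
  have hcont := (continuous_of_unique_isMaxOn hr hmem hmax huniq).continuousAt (x := c)
  have hshift : Tendsto (fun h => c + h) (𝓝 0) (𝓝 c) := by
    simpa using (continuous_const_add c).tendsto 0
  have hgap : Tendsto (fun h => sstar c - sstar (c + h)) (𝓝 0) (𝓝 0) := by
    simpa using (hcont.tendsto.comp hshift).const_sub (sstar c)
  have hlo : (fun h => (sstar c - sstar (c + h)) * h) =o[𝓝 0] fun h => h := by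
    simpa using ((Asymptotics.isLittleO_one_iff ℝ).2 hgap).mul_isBigO
      (Asymptotics.isBigO_refl (fun h : ℝ => h) _)
  rw [hasDerivAt_iff_isLittleO_nhds_zero]
  refine (Asymptotics.isBigO_of_le _ fun h => ?_).trans_isLittleO hlo
  have lower := add_mul_sub_le_revenue hmem hmax hR c (c + h)
  have upper := add_mul_sub_le_revenue hmem hmax hR (c + h) c
  simp only [smul_eq_mul, Real.norm_eq_abs]
  exact abs_le_abs_of_nonneg (by linarith) (by linarith)

end Maximizer

section DerivIntegral

variable {Ω : Type*} [MeasurableSpace Ω] {μ : Measure Ω}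

theorem LipschitzWith.integrable_comp {E F : Type*} [NormedAddCommGroup E]
    [NormedAddCommGroup F] [IsFiniteMeasure μ] {K : NNReal} {R : E → F} (hR : LipschitzWith K R)
    {g : Ω → E} (hg : Integrable g μ) : Integrable (fun ω => R (g ω)) μ := by
  refine Integrable.mono' ((integrable_const ‖R 0‖).add (hg.norm.const_mul K))
    (hR.continuous.comp_aestronglyMeasurable hg.1) (ae_of_all _ fun ω => ?_)
  calc ‖R (g ω)‖ ≤ ‖R 0‖ + ‖R (g ω) - R 0‖ := norm_le_insert' _ _
    _ ≤ ‖R 0‖ + K * ‖g ω - 0‖ := by gcongr; exact hR.norm_sub_le _ _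
    _ = ‖R 0‖ + K * ‖g ω‖ := by rw [sub_zero]

theorem hasDerivAt_comp_max_sub_of_ne {R : ℝ → ℝ} {m x : ℝ} (hmx : m ≠ x)
    (hR : DifferentiableAt ℝ R x) :
    HasDerivAt (fun t => R (max m (x - t))) (if m < x then -deriv R x else 0) 0 := by
  rcases lt_or_gt_of_ne hmx with hlt | hgt
  · rw [if_pos hlt]
    have heq : (fun t => R (max m (x - t))) =ᶠ[𝓝 0] fun t => R (x - t) := by
      filter_upwards [eventually_lt_nhds (sub_pos.2 hlt)] with t ht
      rw [max_eq_right (by linarith)]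
    exact (HasDerivAt.comp_const_sub x 0 (by simpa using hR.hasDerivAt)).congr_of_eventuallyEq heq
  · rw [if_neg (not_lt.2 hgt.le)]
    have heq : (fun t => R (max m (x - t))) =ᶠ[𝓝 0] fun _ => R m := by
      filter_upwards [eventually_gt_nhds (sub_neg.2 hgt)] with t ht
      rw [max_eq_left (by linarith)]
    exact (hasDerivAt_const 0 (R m)).congr_of_eventuallyEq heq

theorem hasDerivAt_integral_comp_max_sub [IsFiniteMeasure μ] {R : ℝ → ℝ} {K : NNReal}
    (hRlip : LipschitzWith K R) (hRdiff : Differentiable ℝ R) {M c : Ω → ℝ}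
    (hM : Measurable M) (hc : Measurable c) (hMi : Integrable M μ) (hci : Integrable c μ)
    (hties : μ {ω | M ω = c ω} = 0) :
    HasDerivAt (fun t => ∫ ω, R (max (M ω) (c ω - t)) ∂μ)
      (∫ ω, if M ω < c ω then -deriv R (c ω) else 0 ∂μ) 0 := by
  refine (hasDerivAt_integral_of_dominated_loc_of_lip (bound := fun _ => (K : ℝ)) univ_mem
    (Eventually.of_forall fun t =>
      (hRlip.continuous.measurable.comp (hM.max (hc.sub_const t))).aestronglyMeasurable)
    (hRlip.integrable_comp (by simp only [sub_zero]; exact hMi.sup hci))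
    ((Measurable.ite (measurableSet_lt hM hc) ((measurable_deriv R).comp hc).neg
      measurable_const).aestronglyMeasurable)
    (ae_of_all _ fun ω => ?_) (integrable_const _) ?_).2
  · rw [Real.nnabs_coe]
    exact ((hRlip.comp (((LipschitzWith.const (c ω)).sub LipschitzWith.id).const_max
      (M ω))).weaken (by simp)).lipschitzOnWith
  · filter_upwards [measure_eq_zero_iff_ae_notMem.1 hties] with ω hω
    exact hasDerivAt_comp_max_sub_of_ne hω (hRdiff _)

end DerivIntegral

theorem Finset.sup'_eq_max_sup'_erase {ι α : Type*} [DecidableEq ι] [LinearOrder α]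
    {s : Finset ι} (hs : s.Nonempty) (f : ι → α) {i : ι} (hi : i ∈ s)
    (h : (s.erase i).Nonempty) :
    s.sup' hs f = max ((s.erase i).sup' h f) (f i) := by
  rw [sup'_congr hs (insert_erase hi).symm (fun _ _ => rfl), sup'_insert, max_comm]

theorem MeasureTheory.Integrable.finset_sup' {Ω ι : Type*} [MeasurableSpace Ω]
    {μ : Measure Ω} {s : Finset ι} (hs : s.Nonempty) {f : ι → Ω → ℝ}
    (hf : ∀ i ∈ s, Integrable (f i) μ) :
    Integrable (s.sup' hs f) μ :=
  Finset.sup'_induction hs f (p := (Integrable · μ)) (fun _ h₁ _ h₂ => h₁.sup h₂) hf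

section Contracts

open Finset

variable {Ω A : Type*}

/-- `Option A` models `A₀ = {0} ∪ A`; `none` is the outside option, whose adjusted quality
`Q_0 - v_0` is `0`. -/
def adjustedQuality (Q : Ω → A → ℝ) (v : A → ℝ) (o : Option A) (ω : Ω) : ℝ :=
  o.elim 0 fun b => Q ω b - v b

section Measurability

variable [MeasurableSpace Ω] {μ : Measure Ω} {Q : Ω → A → ℝ} {v : A → ℝ}

theorem measurable_adjustedQuality (hQ : Measurable Q) (o : Option A) :
    Measurable (adjustedQuality Q v o) := by
  rcases o with _ | b
  exacts [measurable_const, ((measurable_pi_apply b).comp hQ).sub_const _]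

theorem integrable_adjustedQuality [IsFiniteMeasure μ]
    (hQ : ∀ b, Integrable (fun ω => Q ω b) μ) (o : Option A) :
    Integrable (adjustedQuality Q v o) μ := by
  rcases o with _ | b
  exacts [integrable_const 0, (hQ b).sub (integrable_const _)]

end Measurability

variable [Fintype A] [DecidableEq A]

theorem nonempty_erase_some (a : A) : (univ.erase (some a)).Nonempty :=
  ⟨none, mem_erase.2 ⟨(Option.some_ne_none a).symm, mem_univ _⟩⟩

def rivalMax (Q : Ω → A → ℝ) (v : A → ℝ) (a : A) : Ω → ℝ :=
  (univ.erase (some a)).sup' (nonempty_erase_some a) (adjustedQuality Q v)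

theorem sum_update_add_mul (v ρ : A → ℝ) (a : A) (t : ℝ) :
    ∑ b, Function.update v a (v a + t) b * ρ b = ∑ b, v b * ρ b + t * ρ a := by
  rw [← add_sum_erase _ _ (mem_univ a), ← add_sum_erase _ _ (mem_univ a),
    Function.update_self, sum_congr rfl fun b hb => by
      rw [Function.update_of_ne (ne_of_mem_erase hb)]]
  ring

theorem sup'_adjustedQuality_update (Q : Ω → A → ℝ) (v : A → ℝ) (a : A) (t : ℝ) (ω : Ω) :
    univ.sup' univ_nonempty (adjustedQuality Q (Function.update v a (v a + t)) · ω)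
      = max (rivalMax Q v a ω) (adjustedQuality Q v (some a) ω - t) := by
  rw [sup'_eq_max_sup'_erase _ _ (mem_univ (some a)) (nonempty_erase_some a), rivalMax,
    Finset.sup'_apply]
  congr 1
  · refine sup'_congr _ rfl fun o ho => ?_
    rcases o with _ | b
    · rfl
    · have hb : b ≠ a := fun hba => ne_of_mem_erase ho (by rw [hba])
      simp [adjustedQuality, Function.update_of_ne hb]
  · simp only [adjustedQuality, Option.elim, Function.update_self]
    ring

theorem setOf_forall_lt_eq_rivalMax_lt (a : A) :
    {ω | ∀ o, o ≠ some a → adjustedQuality Q v o ω < adjustedQuality Q v (some a) ω}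
      = {ω | rivalMax Q v a ω < adjustedQuality Q v (some a) ω} := by
  ext ω
  rw [mem_ofPred_eq, mem_ofPred_eq, rivalMax, Finset.sup'_apply, sup'_lt_iff]
  simp

variable [MeasurableSpace Ω] {μ : Measure Ω} {Q : Ω → A → ℝ} {v : A → ℝ}

theorem isLocalMin_shifted_dual {R : ℝ → ℝ} {ρ : A → ℝ}
    (hopt : ∀ w : A → ℝ,
      ∫ ω, R (univ.sup' univ_nonempty (adjustedQuality Q v · ω)) ∂μ + ∑ b, v b * ρ b
        ≤ ∫ ω, R (univ.sup' univ_nonempty (adjustedQuality Q w · ω)) ∂μ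
          + ∑ b, w b * ρ b)
    (a : A) :
    IsLocalMin (fun t =>
      ∫ ω, R (max (rivalMax Q v a ω) (adjustedQuality Q v (some a) ω - t)) ∂μ + t * ρ a) 0 := by
  refine Eventually.of_forall fun t => ?_
  have h := hopt (Function.update v a (v a + t))
  have h₀ ω : univ.sup' univ_nonempty (adjustedQuality Q v · ω)
      = max (rivalMax Q v a ω) (adjustedQuality Q v (some a) ω) := by
    simpa using sup'_adjustedQuality_update Q v a 0 ω
  simp only [h₀, sup'_adjustedQuality_update, sum_update_add_mul] at h
  simp only [sub_zero, zero_mul, add_zero]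
  linarith

theorem measurable_rivalMax (hQ : Measurable Q) (a : A) : Measurable (rivalMax Q v a) :=
  Finset.measurable_sup' _ fun o _ => measurable_adjustedQuality hQ o

theorem integrable_rivalMax [IsFiniteMeasure μ] (hQ : ∀ b, Integrable (fun ω => Q ω b) μ)
    (a : A) :
    Integrable (rivalMax Q v a) μ :=
  Integrable.finset_sup' _ fun o _ => integrable_adjustedQuality hQ o

theorem measure_rivalMax_eq_null {a : A}
    (hties : ∀ o ≠ some a,
      μ {ω | adjustedQuality Q v o ω = adjustedQuality Q v (some a) ω} = 0) :
    μ {ω | rivalMax Q v a ω = adjustedQuality Q v (some a) ω} = 0 := by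
  refine measure_mono_null (fun ω hω => ?_)
    ((measure_biUnion_null_iff (countable_toSet (univ.erase (some a)))).2
      fun o ho => hties o (ne_of_mem_erase ho))
  obtain ⟨o, ho, hmax⟩ := exists_mem_eq_sup' (nonempty_erase_some a) (adjustedQuality Q v · ω)
  rw [mem_ofPred_eq, rivalMax, Finset.sup'_apply, hmax] at hω
  exact mem_biUnion ho hω

end Contracts

theorem stmt_8_general {Ω : Type*} [MeasurableSpace Ω] (μ : Measure Ω) [IsProbabilityMeasure μ]
    {A : Type*} [Fintype A]
    (r sstar R : ℝ → ℝ)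
    (hr_cont : ContinuousOn r (Icc 0 1))
    (hsstar_mem : ∀ c : ℝ, sstar c ∈ Icc (0:ℝ) 1)
    (hsstar_max : ∀ c : ℝ, ∀ t ∈ Icc (0:ℝ) 1,
      r t + (1 - t) * c ≤ r (sstar c) + (1 - sstar c) * c)
    (hsstar_uniq : ∀ c : ℝ, ∀ t ∈ Icc (0:ℝ) 1,
      (∀ u ∈ Icc (0:ℝ) 1, r u + (1 - u) * c ≤ r t + (1 - t) * c) → t = sstar c)
    (hR : ∀ c : ℝ, R c = r (sstar c) + (1 - sstar c) * c)
    (Q : Ω → A → ℝ) (hQmeas : Measurable Q)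
    (hQint : ∀ a : A, Integrable (fun ω => Q ω a) μ)
    (ρ : A → ℝ)
    (v : A → ℝ)
    (hopt : ∀ w : A → ℝ,
      (∫ ω, R (Finset.univ.sup' Finset.univ_nonempty
          (fun o : Option A => o.elim 0 (fun a => Q ω a - v a))) ∂μ)
        + ∑ a : A, v a * ρ a
      ≤ (∫ ω, R (Finset.univ.sup' Finset.univ_nonempty
          (fun o : Option A => o.elim 0 (fun a => Q ω a - w a))) ∂μ)
        + ∑ a : A, w a * ρ a)
    (hties : ∀ o o' : Option A, o ≠ o' →
      μ {ω | o.elim 0 (fun a => Q ω a - v a) = o'.elim 0 (fun a => Q ω a - v a)} = 0) :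
    ∀ a : A,
      ∫ ω, (1 - sstar (Q ω a - v a))
          * Set.indicator
              {ω' : Ω | ∀ o : Option A, o ≠ some a →
                o.elim 0 (fun b => Q ω' b - v b) < Q ω' a - v a}
              1 ω ∂μ = ρ a := by
  intro a
  classical
  have hmax c := isMaxOn_iff.2 (hsstar_max c)
  have huniq c t ht (h : IsMaxOn _ _ t) := hsstar_uniq c t ht (isMaxOn_iff.1 h)
  have hderivR c := hasDerivAt_revenue hr_cont hsstar_mem hmax huniq hR c
  set M := rivalMax Q v a
  set c := adjustedQuality Q v (some a)
  have hderiv := hasDerivAt_integral_comp_max_sub (lipschitzWith_one_revenue hsstar_mem hmax hR)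
    (fun x => (hderivR x).differentiableAt) (measurable_rivalMax hQmeas a)
    (measurable_adjustedQuality hQmeas _) (integrable_rivalMax hQint a)
    (integrable_adjustedQuality hQint _) (measure_rivalMax_eq_null fun o ho => hties o _ ho)
  have hzero := (isLocalMin_shifted_dual hopt a).hasDerivAt_eq_zero
    (hderiv.add ((hasDerivAt_id 0).mul_const (ρ a)))
  have hint : ∫ ω, (1 - sstar (c ω)) * {ω | M ω < c ω}.indicator 1 ω ∂μ
      = -∫ ω, (if M ω < c ω then -deriv R (c ω) else 0) ∂μ := by
    rw [← integral_neg]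
    refine integral_congr_ae (ae_of_all _ fun ω => ?_)
    by_cases h : M ω < c ω <;> simp [h, (hderivR _).deriv]
  change ∫ ω, (1 - sstar (c ω))
    * {ω | ∀ o, o ≠ some a → adjustedQuality Q v o ω < c ω}.indicator 1 ω ∂μ = ρ a
  rw [setOf_forall_lt_eq_rivalMax_lt, hint]
  linarith

/-- Theorem 1 of the paper. If `v` minimizes the dual objective
`ψ(w) = E[R(max_{a∈A₀}(Q_a - w_a))] + Σ_a w_a ρ_a` and ties occur with probability zero, then
for each advertiser `a`, `E[(1 - s*(Q_a - v_a)) · 1{Q_a - v_a > Q_{a'} - v_{a'} ∀ a' ≠ a}] = ρ_a`.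
Here `A₀ = {0} ∪ A`, `Q_0 ≡ 0`, `v_0 = 0`, `r` is a regular revenue function, `s*(c)` is its
unique maximizer and `R(c) = r(s*(c)) + (1 - s*(c))·c`. -/
theorem stmt_8 {Ω : Type*} [MeasurableSpace Ω] (μ : Measure Ω) [IsProbabilityMeasure μ]
    {A : Type*} [Fintype A]
    (r sstar R : ℝ → ℝ)
    (hr_cont : ContinuousOn r (Icc 0 1))
    (hr_conc : ConcaveOn ℝ (Icc 0 1) r)
    (hr_nonneg : ∀ u ∈ Icc (0:ℝ) 1, 0 ≤ r u)
    (hr_bdd : ∃ M : ℝ, ∀ u ∈ Icc (0:ℝ) 1, r u ≤ M)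
    (hr_zero : r 0 = 0)
    (hsstar_mem : ∀ c : ℝ, sstar c ∈ Icc (0:ℝ) 1)
    (hsstar_max : ∀ c : ℝ, ∀ t ∈ Icc (0:ℝ) 1,
      r t + (1 - t) * c ≤ r (sstar c) + (1 - sstar c) * c)
    (hsstar_uniq : ∀ c : ℝ, ∀ t ∈ Icc (0:ℝ) 1,
      (∀ u ∈ Icc (0:ℝ) 1, r u + (1 - u) * c ≤ r t + (1 - t) * c) → t = sstar c)
    (hR : ∀ c : ℝ, R c = r (sstar c) + (1 - sstar c) * c)
    (Q : Ω → A → ℝ) (hQmeas : Measurable Q)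
    (hQint : ∀ a : A, Integrable (fun ω => Q ω a) μ)
    (ρ : A → ℝ) (hρ : ∀ a, ρ a ∈ Ioo (0:ℝ) 1)
    (v : A → ℝ)
    (hopt : ∀ w : A → ℝ,
      (∫ ω, R (Finset.univ.sup' Finset.univ_nonempty
          (fun o : Option A => o.elim 0 (fun a => Q ω a - v a))) ∂μ)
        + ∑ a : A, v a * ρ a
      ≤ (∫ ω, R (Finset.univ.sup' Finset.univ_nonempty
          (fun o : Option A => o.elim 0 (fun a => Q ω a - w a))) ∂μ)
        + ∑ a : A, w a * ρ a)
    (hties : ∀ o o' : Option A, o ≠ o' →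
      μ {ω | o.elim 0 (fun a => Q ω a - v a) = o'.elim 0 (fun a => Q ω a - v a)} = 0) :
    ∀ a : A,
      ∫ ω, (1 - sstar (Q ω a - v a))
          * Set.indicator
              {ω' : Ω | ∀ o : Option A, o ≠ some a →
                o.elim 0 (fun b => Q ω' b - v b) < Q ω' a - v a}
              1 ω ∂μ = ρ a :=
  stmt_8_general μ r sstar R hr_cont hsstar_mem hsstar_max hsstar_uniq hR Q hQmeas hQint ρ v hopt
    hties
end

section
/- Let X_1, …, X_m (m ≥ 1) be real-valued square-integrable random variables on a probability space. Then E[ min_{1≤i≤m} X_i ] ≥ min_{1≤i≤m} E[X_i] − √( ((m−1)/m) · Σ_{i=1}^m Var[X_i] ). -/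
/-!
Centre the variables, `Zᵢ = Xᵢ - E Xᵢ`. Pointwise, `min Xᵢ ≥ min E Xᵢ + min Zᵢ`, and Samuelson's
inequality says that `m` reals cannot lie far below their mean:
`min zᵢ ≥ z̄ - √((m - 1) / m · ∑ zᵢ²)`. Taking expectations, the mean of the `Zᵢ` integrates to
zero, and Jensen's inequality for the concave `√` gives
`E √((m - 1) / m · ∑ Zᵢ²) ≤ √((m - 1) / m · ∑ Var Xᵢ)`.
-/

open MeasureTheory ProbabilityTheory Finset

namespace Finset

variable {ι : Type*} (s : Finset ι) (z : ι → ℝ)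

theorem card_mul_sq_sub_mean_le {k : ι} (hk : k ∈ s) :
    #s * (z k - (∑ i ∈ s, z i) / #s) ^ 2
      ≤ (#s - 1) * ∑ i ∈ s, (z i - (∑ i ∈ s, z i) / #s) ^ 2 := by
  classical
  set a := (∑ i ∈ s, z i) / #s
  have hcard : 0 < #s := card_pos.2 ⟨k, hk⟩
  -- The deviations from the mean sum to zero, so the one at `k` is minus the sum of the others;
  -- apply Cauchy–Schwarz to those `#s - 1` terms.
  have hsum : ∑ i ∈ s.erase k, (z i - a) = -(z k - a) := by
    rw [sum_erase_eq_sub hk, sum_sub_distrib, sum_const, nsmul_eq_mul,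
      mul_div_cancel₀ _ (by positivity)]
    ring
  have hcs := sq_sum_le_card_mul_sum_sq (s := s.erase k) (f := fun i => z i - a)
  rw [hsum, card_erase_of_mem hk, sum_erase_eq_sub hk, Nat.cast_sub hcard] at hcs
  push_cast at hcs
  linear_combination hcs

theorem sum_sq_sub_mean_le_sum_sq :
    ∑ i ∈ s, (z i - (∑ i ∈ s, z i) / #s) ^ 2 ≤ ∑ i ∈ s, z i ^ 2 := by
  set a := (∑ i ∈ s, z i) / #s
  have hexpand : ∑ i ∈ s, (z i - a) ^ 2 = ∑ i ∈ s, z i ^ 2 - #s * a ^ 2 := by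
    rcases s.eq_empty_or_nonempty with rfl | hs
    · simp
    have hsum : ∑ i ∈ s, z i = #s * a := by
      rw [mul_div_cancel₀ _ (by positivity)]
    simp only [sub_sq, sum_add_distrib, sum_sub_distrib, ← sum_mul, ← mul_sum, sum_const,
      nsmul_eq_mul, hsum]
    ring
  have hmean_sq : (0 : ℝ) ≤ #s * a ^ 2 := by positivity
  linarith

theorem mean_sub_sqrt_le {k : ι} (hk : k ∈ s) :
    (∑ i ∈ s, z i) / #s - √((#s - 1) / #s * ∑ i ∈ s, z i ^ 2) ≤ z k := by
  have hcard : (1 : ℝ) ≤ #s := Nat.one_le_cast.2 (card_pos.2 ⟨k, hk⟩)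
  have hsq : ((∑ i ∈ s, z i) / #s - z k) ^ 2 ≤ (#s - 1) / #s * ∑ i ∈ s, z i ^ 2 := by
    rw [div_mul_eq_mul_div, le_div_iff₀ (by positivity)]
    calc ((∑ i ∈ s, z i) / #s - z k) ^ 2 * #s
        = #s * (z k - (∑ i ∈ s, z i) / #s) ^ 2 := by ring
      _ ≤ (#s - 1) * ∑ i ∈ s, (z i - (∑ i ∈ s, z i) / #s) ^ 2 :=
        card_mul_sq_sub_mean_le s z hk
      _ ≤ (#s - 1) * ∑ i ∈ s, z i ^ 2 := by
        gcongr ?_ * ?_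
        exact sum_sq_sub_mean_le_sum_sq s z
  linarith [le_abs_self ((∑ i ∈ s, z i) / #s - z k), Real.abs_le_sqrt hsq]

theorem inf'_add_mean_sub_sqrt_le_inf' (hs : s.Nonempty) (x e : ι → ℝ) :
    s.inf' hs e + (∑ i ∈ s, (x i - e i)) / #s - √((#s - 1) / #s * ∑ i ∈ s, (x i - e i) ^ 2)
      ≤ s.inf' hs x :=
  le_inf' _ _ fun i hi => by
    linarith [inf'_le e hi, mean_sub_sqrt_le s (fun i => x i - e i) hi]

end Finset

section Integral

variable {Ω : Type*} [MeasurableSpace Ω] {μ : Measure Ω}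

theorem MeasureTheory.Integrable.finset_inf'_apply {ι β : Type*} [NormedAddCommGroup β]
    [Lattice β] [HasSolidNorm β] [IsOrderedAddMonoid β] {s : Finset ι} (hs : s.Nonempty)
    {f : ι → Ω → β} (hf : ∀ i ∈ s, Integrable (f i) μ) :
    Integrable (fun ω => s.inf' hs fun i => f i ω) μ := by
  simpa only [← Finset.inf'_apply] using
    Finset.inf'_induction hs f (p := (Integrable · μ)) (fun _ h₁ _ h₂ => h₁.inf h₂) hf

theorem MeasureTheory.Integrable.sqrt [IsFiniteMeasure μ] {f : Ω → ℝ} (hf : Integrable f μ)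
    (hf0 : 0 ≤ᵐ[μ] f) : Integrable (fun ω => √(f ω)) μ := by
  refine ((memLp_two_iff_integrable_sq
    (Real.continuous_sqrt.comp_aestronglyMeasurable hf.aestronglyMeasurable)).2 ?_).integrable
    one_le_two
  refine hf.congr ?_
  filter_upwards [hf0] with ω hω
  exact (Real.sq_sqrt hω).symm

theorem integral_sqrt_le_sqrt_integral [IsProbabilityMeasure μ] {f : Ω → ℝ}
    (hf : Integrable f μ) (hf0 : 0 ≤ᵐ[μ] f) :
    ∫ ω, √(f ω) ∂μ ≤ √(∫ ω, f ω ∂μ) :=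
  Real.strictConcaveOn_sqrt.concaveOn.le_map_integral Real.continuous_sqrt.continuousOn
    isClosed_Ici hf0 hf (hf.sqrt hf0)

theorem integral_sum_sub_integral [IsProbabilityMeasure μ] {ι : Type*} (s : Finset ι)
    {X : ι → Ω → ℝ} (hX : ∀ i ∈ s, Integrable (X i) μ) :
    ∫ ω, ∑ i ∈ s, (X i ω - μ[X i]) ∂μ = 0 := by
  have hZ i (hi : i ∈ s) : Integrable (fun ω => X i ω - μ[X i]) μ :=
    (hX i hi).sub (integrable_const _)
  rw [integral_finsetSum _ hZ]
  exact sum_eq_zero fun i hi => by simp [integral_sub (hX i hi) (integrable_const _)]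

section SumOfVariances

variable [IsFiniteMeasure μ] {ι : Type*} (s : Finset ι) {X : ι → Ω → ℝ}
  (hX : ∀ i ∈ s, MemLp (X i) 2 μ)
include hX

theorem integrable_sq_sub_integral {i : ι} (hi : i ∈ s) :
    Integrable (fun ω => (X i ω - μ[X i]) ^ 2) μ :=
  ((hX i hi).sub (memLp_const _)).integrable_sq

theorem integrable_sum_sq_sub_integral :
    Integrable (fun ω => ∑ i ∈ s, (X i ω - μ[X i]) ^ 2) μ :=
  integrable_finsetSum _ fun _ hi => integrable_sq_sub_integral s hX hi

theorem integral_sum_sq_sub_integral :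
    ∫ ω, ∑ i ∈ s, (X i ω - μ[X i]) ^ 2 ∂μ = ∑ i ∈ s, Var[X i; μ] := by
  rw [integral_finsetSum _ fun _ hi => integrable_sq_sub_integral s hX hi]
  exact sum_congr rfl fun i hi =>
    (variance_eq_integral (hX i hi).aestronglyMeasurable.aemeasurable).symm

end SumOfVariances

end Integral

theorem stmt_12_general {Ω : Type*} [MeasurableSpace Ω] (μ : Measure Ω) [IsProbabilityMeasure μ]
    {ι : Type*} [Fintype ι] [Nonempty ι]
    (X : ι → Ω → ℝ)
    (hXL2 : ∀ i, MemLp (X i) 2 μ) :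
    (Finset.univ.inf' Finset.univ_nonempty (fun i => ∫ ω, X i ω ∂μ))
        - Real.sqrt ((((Fintype.card ι : ℝ) - 1) / (Fintype.card ι : ℝ))
            * ∑ i, ProbabilityTheory.variance (X i) μ)
      ≤ ∫ ω, Finset.univ.inf' Finset.univ_nonempty (fun i => X i ω) ∂μ := by
  set m : ℝ := (Fintype.card ι : ℝ)
  set minE := univ.inf' univ_nonempty fun i => μ[X i]
  set V : Ω → ℝ := fun ω => (m - 1) / m * ∑ i, (X i ω - μ[X i]) ^ 2
  have hXint i : Integrable (X i) μ := (hXL2 i).integrable one_le_two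
  have hVint : Integrable V μ :=
    (integrable_sum_sq_sub_integral univ fun i _ => hXL2 i).const_mul _
  have hV0 : 0 ≤ᵐ[μ] V := .of_forall fun ω => mul_nonneg
    (div_nonneg (sub_nonneg.2 (Nat.one_le_cast.2 Fintype.card_pos)) (Nat.cast_nonneg _))
    (sum_nonneg fun i _ => sq_nonneg _)
  have hmean_int : Integrable (fun ω => (∑ i, (X i ω - μ[X i])) / m) μ :=
    (integrable_finsetSum _ fun i _ => (hXint i).sub (integrable_const _)).div_const _
  have hbase_int : Integrable (fun ω => minE + (∑ i, (X i ω - μ[X i])) / m) μ :=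
    (integrable_const _).add hmean_int
  calc minE - √((m - 1) / m * ∑ i, Var[X i; μ])
      ≤ minE - ∫ ω, √(V ω) ∂μ := by
        rw [← integral_sum_sq_sub_integral univ fun i _ => hXL2 i, ← integral_const_mul]
        gcongr
        exact integral_sqrt_le_sqrt_integral hVint hV0
    _ = ∫ ω, minE + (∑ i, (X i ω - μ[X i])) / m - √(V ω) ∂μ := by
        rw [integral_sub hbase_int (hVint.sqrt hV0),
          integral_add (integrable_const _) hmean_int, integral_div,
          integral_sum_sub_integral univ fun i _ => hXint i]
        simp
    _ ≤ _ := integral_mono (hbase_int.sub (hVint.sqrt hV0))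
        (Integrable.finset_inf'_apply _ fun i _ => hXint i) fun ω => by
          simpa using inf'_add_mean_sub_sqrt_le_inf' univ univ_nonempty (X · ω) _

/-- Aven's (1985) bound: for square-integrable random variables `X_i`
(`i` ranging over a nonempty finite index set of cardinality `m`),
`E[min_i X_i] ≥ min_i E[X_i] − √(((m−1)/m) · Σ_i Var[X_i])`. No independence is assumed. -/
theorem stmt_12 {Ω : Type*} [MeasurableSpace Ω] (μ : Measure Ω) [IsProbabilityMeasure μ]
    {ι : Type*} [Fintype ι] [Nonempty ι]
    (X : ι → Ω → ℝ) (hXmeas : ∀ i, Measurable (X i))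
    (hXL2 : ∀ i, MemLp (X i) 2 μ) :
    (Finset.univ.inf' Finset.univ_nonempty (fun i => ∫ ω, X i ω ∂μ))
        - Real.sqrt ((((Fintype.card ι : ℝ) - 1) / (Fintype.card ι : ℝ))
            * ∑ i, ProbabilityTheory.variance (X i) μ)
      ≤ ∫ ω, Finset.univ.inf' Finset.univ_nonempty (fun i => X i ω) ∂μ :=
  stmt_12_general μ X hXL2
end
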